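/- arXiv:1512.06849 — 3 statements merged into one kernel-verified Lean document; each statement's English description precedes it below -/
import Mathlib

section
/- If X is a metrizable uniformly hemicompact space, then the set CL(X) of closed subsets of X equipped with the Fell topology is metrizable. -/
/-!
Sending a closed set `A` to `A ∪ {∞}` identifies the Fell topology on the closed subsets of a
Hausdorff space `X` with the Vietoris topology on compact subsets of the one-point
compactification `X∞`: hit-sets of open `U ⊆ X` stay hit-sets, and the miss-set of a compact
`K ⊆ X` becomes the family of subsets of the open neighbourhood `X∞ \ K` of `∞`. A metric space
with a compact exhaustion is locally compact and σ-compact, hence second countable, and the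
complements of the exhaustion form a countable neighbourhood basis of `∞`, so `X∞` is compact,
Hausdorff and second countable. Its compact subsets then form a regular second countable space
under the Vietoris topology, which is metrizable by Urysohn's theorem.
-/

open TopologicalSpace Set Topology OnePoint

abbrev fellTopology (X : Type*) [TopologicalSpace X] : TopologicalSpace {A : Set X // IsClosed A} :=
  generateFrom
    ({S | ∃ U : Set X, IsOpen U ∧ S = {A | (A.1 ∩ U).Nonempty}} ∪
      {S | ∃ K : Set X, IsCompact K ∧ S = {A | A.1 ⊆ Kᶜ}})

namespace CompactExhaustion

variable {X : Type*} [TopologicalSpace X]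

theorem sigmaCompactSpace (K : CompactExhaustion X) : SigmaCompactSpace X :=
  ⟨⟨K, K.isCompact, K.iUnion_eq⟩⟩

theorem weaklyLocallyCompactSpace (K : CompactExhaustion X) : WeaklyLocallyCompactSpace X :=
  ⟨fun x => (K.exists_mem_nhds x).elim fun n hn => ⟨K n, K.isCompact n, hn⟩⟩

end CompactExhaustion

namespace OnePoint

variable {X : Type*}

theorem preimage_coe_insert_infty_image_coe (A : Set X) :
    ((↑) : X → OnePoint X) ⁻¹' insert ∞ ((↑) '' A) = A := by
  ext x
  simp

theorem insert_infty_image_coe_subset_iff {A : Set X} {U : Set (OnePoint X)} :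
    insert ∞ ((↑) '' A) ⊆ U ↔ ∞ ∈ U ∧ A ⊆ (↑) ⁻¹' U := by
  rw [insert_subset_iff, image_subset_iff]

theorem insert_infty_image_coe_inter_nonempty_iff {A : Set X} {V : Set (OnePoint X)} :
    (insert ∞ ((↑) '' A) ∩ V).Nonempty ↔ ∞ ∈ V ∨ (A ∩ (↑) ⁻¹' V).Nonempty := by
  rw [insert_eq, union_inter_distrib_right, union_nonempty, singleton_inter_nonempty,
    image_inter_nonempty_iff]

variable [TopologicalSpace X]

theorem hasBasis_nhds_infty_compactExhaustion [T2Space X] (K : CompactExhaustion X) :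
    (𝓝 (∞ : OnePoint X)).HasBasis (fun _ => True) fun n => ((↑) '' K n)ᶜ :=
  hasBasis_nhds_infty.to_hasBasis
    (fun _ ⟨_, hs⟩ => (K.exists_superset_of_isCompact hs).imp fun _ hn =>
      ⟨trivial, by rw [compl_image_coe]; gcongr⟩)
    fun n _ => ⟨K n, ⟨(K.isCompact n).isClosed, K.isCompact n⟩, (compl_image_coe _).ge⟩

instance [T2Space X] [LocallyCompactSpace X] [SecondCountableTopology X] :
    SecondCountableTopology (OnePoint X) := by
  let K : CompactExhaustion X := default
  have hbasis : IsTopologicalBasis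
      (((↑) '' ·) '' countableBasis X ∪ range fun n => ((↑) '' K n : Set (OnePoint X))ᶜ) := by
    refine isTopologicalBasis_of_isOpen_of_nhds ?_ fun y u hyu hu => ?_
    · rintro _ (⟨U, hU, rfl⟩ | ⟨n, rfl⟩)
      · exact isOpen_image_coe.2 ((isBasis_countableBasis X).isOpen hU)
      · exact isOpen_compl_image_coe.2 ⟨(K.isCompact n).isClosed, K.isCompact n⟩
    induction y using OnePoint.rec with
    | infty =>
      obtain ⟨n, -, hn⟩ := (hasBasis_nhds_infty_compactExhaustion K).mem_iff.1 (hu.mem_nhds hyu)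
      exact ⟨_, .inr ⟨n, rfl⟩, infty_notMem_image_coe, hn⟩
    | coe x =>
      obtain ⟨U, hU, hxU, hUu⟩ := (isBasis_countableBasis X).exists_subset_of_mem_open hyu
        (hu.preimage continuous_coe)
      exact ⟨_, .inl ⟨U, hU, rfl⟩, mem_image_of_mem _ hxU, image_subset_iff.2 hUu⟩
  exact hbasis.secondCountableTopology
    ((countable_countableBasis X).image _ |>.union (countable_range _))

theorem isClosed_insert_infty_image_coe {A : Set X} (hA : IsClosed A) :
    IsClosed (insert ∞ ((↑) '' A) : Set (OnePoint X)) := by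
  rwa [isClosed_iff_of_mem (mem_insert _ _), preimage_coe_insert_infty_image_coe]

def compactsOfClosed (A : {A : Set X // IsClosed A}) : Compacts (OnePoint X) :=
  ⟨insert ∞ ((↑) '' A.1), (isClosed_insert_infty_image_coe A.2).isCompact⟩

theorem compactsOfClosed_injective : Function.Injective (compactsOfClosed (X := X)) := by
  intro A B h
  have := congrArg (((↑) : X → OnePoint X) ⁻¹' ·) (congrArg SetLike.coe h)
  simpa [compactsOfClosed, preimage_coe_insert_infty_image_coe, Subtype.ext_iff] using this

theorem fellTopology_eq_induced_vietoris [T2Space X] :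
    fellTopology X = .induced (fun A => insert ∞ ((↑) '' A.1)) (.vietoris (OnePoint X)) := by
  rw [TopologicalSpace.vietoris, induced_generateFrom_eq]
  apply le_antisymm
  · refine le_generateFrom ?_
    rintro _ ⟨_, ⟨U, hU, rfl⟩ | ⟨V, hV, rfl⟩, rfl⟩
    · by_cases h : ∞ ∈ U
      · refine isOpen_generateFrom_of_mem
          (.inr ⟨((↑) ⁻¹' U)ᶜ, ((isOpen_iff_of_mem h).1 hU).2, ?_⟩)
        ext A
        simp [insert_infty_image_coe_subset_iff, h]
      · convert isOpen_empty
        ext A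
        simp [insert_infty_image_coe_subset_iff, h]
    · by_cases h : ∞ ∈ V
      · convert isOpen_univ
        ext A
        simp [insert_infty_image_coe_inter_nonempty_iff, h]
      · refine isOpen_generateFrom_of_mem (.inl ⟨(↑) ⁻¹' V, hV.preimage continuous_coe, ?_⟩)
        ext A
        simp [insert_infty_image_coe_inter_nonempty_iff, h]
  · refine le_generateFrom ?_
    rintro _ (⟨U, hU, rfl⟩ | ⟨K, hK, rfl⟩)
    · refine isOpen_generateFrom_of_mem ⟨_, .inr ⟨_, isOpen_image_coe.2 hU, rfl⟩, ?_⟩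
      ext A
      simp [insert_infty_image_coe_inter_nonempty_iff, preimage_image_eq _ coe_injective]
    · refine isOpen_generateFrom_of_mem
        ⟨_, .inl ⟨_, isOpen_compl_image_coe.2 ⟨hK.isClosed, hK⟩, rfl⟩, ?_⟩
      ext A
      simp [insert_infty_image_coe_subset_iff, preimage_image_eq _ coe_injective]

theorem isEmbedding_compactsOfClosed [T2Space X] :
    @IsEmbedding _ _ (fellTopology X) _ (compactsOfClosed (X := X)) :=
  let := fellTopology X
  let := TopologicalSpace.vietoris (OnePoint X)
  ⟨(Compacts.isEmbedding_coe.isInducing.of_comp_iff).1 ⟨fellTopology_eq_induced_vietoris⟩,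
    compactsOfClosed_injective⟩

end OnePoint

/-- If `X` is a metrizable uniformly hemicompact space, then the set of closed
subsets of `X` with the Fell topology is metrizable. -/
theorem fell_metrizable_of_uniformly_hemicompact {X : Type*} [MetricSpace X]
    (H : ℕ → Set X) (hcomp : ∀ k, IsCompact (H k))
    (hunion : ⋃ k, H k = Set.univ)
    (hnbhd : ∀ k, H k ⊆ interior (H (k + 1))) :
    @TopologicalSpace.MetrizableSpace {A : Set X // IsClosed A}
      (generateFrom
        ({S : Set {A : Set X // IsClosed A} |
            ∃ U : Set X, IsOpen U ∧ S = {A | (A.1 ∩ U).Nonempty}} ∪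
         {S | ∃ K : Set X, IsCompact K ∧ S = {A | A.1 ⊆ Kᶜ}})) := by
  let K : CompactExhaustion X := ⟨H, hcomp, hnbhd, hunion⟩
  have := K.sigmaCompactSpace
  have := K.weaklyLocallyCompactSpace
  let := fellTopology X
  exact isEmbedding_compactsOfClosed.metrizableSpace
end

section
/- Let f : [0,∞) → [0,∞) be non-decreasing with f(0)=0 and define graph(f) = {(x₁,x₂) : f(x₁⁻) ≤ x₂ ≤ f(x₁⁺)}. Then graph(f) is a connected subset of [0,∞)². -/
open Function
open scoped NNReal

/-!
Points of the completed graph of a non-decreasing function are pairwise comparable in the product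
order, so on the graph the coordinate sum `p.1 + p.2` is injective with a 1-Lipschitz inverse.
Since `f(0) = 0`, this sum is also onto `[0,∞)`: for `t ≥ 0` take `x = sup {y | y + f y ≤ t}`.
The graph is therefore a continuous image of `[0,∞)`.
-/

open Set Filter Topology

def completedGraph {α β : Type*} [LinearOrder α] [Preorder β] [TopologicalSpace β] (f : α → β) :
    Set (α × β) :=
  {p | leftLim f p.1 ≤ p.2 ∧ p.2 ≤ rightLim f p.1}

theorem Monotone.isChain_completedGraph {α β : Type*} [LinearOrder α]
    [ConditionallyCompleteLinearOrder β] [TopologicalSpace β] [OrderTopology β] {f : α → β}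
    (hf : Monotone f) : IsChain (· ≤ ·) (completedGraph f) := by
  have le_of_fst_lt : ∀ p ∈ completedGraph f, ∀ q ∈ completedGraph f, p.1 < q.1 → p ≤ q :=
    fun p hp q hq hlt => ⟨hlt.le, hp.2.trans <| (hf.rightLim_le_leftLim hlt).trans hq.1⟩
  intro p hp q hq _
  rcases lt_trichotomy p.1 q.1 with hlt | heq | hgt
  · exact .inl (le_of_fst_lt p hp q hq hlt)
  · rcases le_total p.2 q.2 with h | h
    · exact .inl ⟨heq.le, h⟩
    · exact .inr ⟨heq.ge, h⟩
  · exact .inr (le_of_fst_lt q hq p hp hgt)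

theorem NNReal.dist_le_dist_add_of_le {p q : ℝ≥0 × ℝ≥0} (h : p ≤ q) :
    dist p q ≤ dist (p.1 + p.2) (q.1 + q.2) := by
  have h₁ : (p.1 : ℝ) ≤ q.1 := h.1
  have h₂ : (p.2 : ℝ) ≤ q.2 := h.2
  simp only [Prod.dist_eq, NNReal.dist_eq, NNReal.coe_add]
  rw [abs_of_nonpos (by linarith), abs_of_nonpos (by linarith), abs_of_nonpos (by linarith)]
  exact max_le (by linarith) (by linarith)

theorem IsChain.dist_le_dist_add {s : Set (ℝ≥0 × ℝ≥0)} (hs : IsChain (· ≤ ·) s)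
    {p q : ℝ≥0 × ℝ≥0} (hp : p ∈ s) (hq : q ∈ s) :
    dist p q ≤ dist (p.1 + p.2) (q.1 + q.2) := by
  rcases hs.total hp hq with h | h
  · exact NNReal.dist_le_dist_add_of_le h
  · rw [dist_comm, dist_comm (p.1 + p.2)]
    exact NNReal.dist_le_dist_add_of_le h

theorem IsChain.isConnected_of_surjOn_add {s : Set (ℝ≥0 × ℝ≥0)} (hs : IsChain (· ≤ ·) s)
    (hsurj : SurjOn (fun p => p.1 + p.2) s univ) : IsConnected s := by
  choose g hgs hgsum using fun t => hsurj (mem_univ t)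
  have hg : LipschitzWith 1 g := LipschitzWith.of_dist_le_mul fun a b => by
    simpa [hgsum] using hs.dist_le_dist_add (hgs a) (hgs b)
  have hrange : range g = s := by
    refine (range_subset_iff.2 hgs).antisymm fun p hp => ⟨p.1 + p.2, ?_⟩
    simpa [hgsum] using hs.dist_le_dist_add (hgs (p.1 + p.2)) hp
  have : ConnectedSpace ℝ≥0 := ⟨⟨0⟩⟩
  exact hrange ▸ isConnected_range hg.continuous

theorem Monotone.exists_mem_completedGraph_add_eq {f : ℝ≥0 → ℝ≥0} (hf : Monotone f)
    (h0 : f 0 = 0) (t : ℝ≥0) : ∃ p ∈ completedGraph f, p.1 + p.2 = t := by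
  set A := {y | y + f y ≤ t}
  have hA0 : 0 ∈ A := by simp [A, h0]
  have hAt : ∀ y ∈ A, y ≤ t := fun y hy => le_self_add.trans hy
  set x := sSup A
  have hxt : x ≤ t := csSup_le ⟨0, hA0⟩ hAt
  have htsub : Tendsto (fun y => t - y) (𝓝 x) (𝓝 (t - x)) :=
    tendsto_const_nhds.sub tendsto_id
  refine ⟨(x, t - x), ⟨?_, ?_⟩, add_tsub_cancel_of_le hxt⟩
  · rcases eq_zero_or_pos x with hx | hx
    · rw [hx, leftLim_eq_of_isBot fun _ => zero_le, h0]
      exact zero_le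
    have : (𝓝[<] x).NeBot := nhdsLT_neBot_of_exists_lt ⟨0, hx⟩
    refine le_of_tendsto_of_tendsto (hf.tendsto_leftLim x) (htsub.mono_left nhdsWithin_le_nhds)
      (eventually_nhdsWithin_of_forall fun y (hy : y < x) => ?_)
    obtain ⟨a, ha, hya⟩ := exists_lt_of_lt_csSup ⟨0, hA0⟩ hy
    exact le_tsub_of_add_le_left <| (add_le_add hya.le (hf hya.le)).trans ha
  · refine le_of_tendsto_of_tendsto (htsub.mono_left nhdsWithin_le_nhds) (hf.tendsto_rightLim x)
      (eventually_nhdsWithin_of_forall fun y (hy : x < y) => ?_)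
    have hyA : y ∉ A := notMem_of_csSup_lt hy ⟨t, hAt⟩
    exact tsub_le_iff_left.2 (not_le.1 hyA).le

/-- The completed graph of a non-decreasing `f : [0,∞) → [0,∞)` with `f 0 = 0`
is a connected subset of `[0,∞)²`. -/
theorem completedGraph_isConnected (f : ℝ≥0 → ℝ≥0) (hf : Monotone f) (h0 : f 0 = 0) :
    IsConnected {p : ℝ≥0 × ℝ≥0 | leftLim f p.1 ≤ p.2 ∧ p.2 ≤ rightLim f p.1} :=
  hf.isChain_completedGraph.isConnected_of_surjOn_add fun t _ =>
    hf.exists_mem_completedGraph_add_eq h0 t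
end

section
/- Define d₁(L, L') = max_{v ∈ S(L)} min_{w ∈ S(L')} angle(v, w) for d-dimensional linear subspaces L, L' of ℝⁿ, where S(L) is the unit sphere of L. Then d₁ is symmetric: max_{v ∈ S(L)} min_{w ∈ S(L')} angle(v,w) = max_{w ∈ S(L')} min_{v ∈ S(L)} angle(v,w), for L, L' of the same dimension d. -/
/-!
For a unit vector `v`, the unit vector of `L'` closest to `v` points along the orthogonal
projection `P' v`, so `min_{w ∈ S(L')} angle(v, w) = arccos ‖P' v‖`; as `arccos` is decreasing,
`d₁(L, L') = arccos (min_{v ∈ S(L)} ‖P' v‖)`. That minimum is the smallest singular value of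
`P'` restricted to `L → L'`, whose adjoint is the projection `P` restricted to `L' → L`. An
operator `A` between spaces of equal finite dimension and its adjoint have the same smallest
singular value: by the Rayleigh principle a minimiser `x₀` of `‖A x‖` on the sphere satisfies
`A* A x₀ = ‖A x₀‖² x₀`, so the unit vector along `A x₀` does as well for `A*`; and if
`A x₀ = 0`, then `A` is not surjective and `A*` has a kernel.
-/

open InnerProductGeometry Metric ContinuousLinearMap Module

section SmallestSingularValue

variable {X Y : Type*} [NormedAddCommGroup X] [InnerProductSpace ℝ X]
  [NormedAddCommGroup Y] [InnerProductSpace ℝ Y]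

theorem ContinuousLinearMap.adjoint_apply_apply_eq_of_isMinOn [CompleteSpace X] [CompleteSpace Y]
    (A : X →L[ℝ] Y) {x₀ : X} (hx₀ : ‖x₀‖ = 1)
    (hmin : IsMinOn (fun x => ‖A x‖) (sphere 0 1) x₀) :
    adjoint A (A x₀) = ‖A x₀‖ ^ 2 • x₀ := by
  have hextr : IsMinOn (adjoint A ∘L A).reApplyInnerSelf (sphere 0 ‖x₀‖) x₀ := by
    rw [hx₀]
    intro x hx
    simp only [Set.mem_ofPred_eq, reApplyInnerSelf, ← apply_norm_sq_eq_inner_adjoint_left]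
    exact pow_le_pow_left₀ (norm_nonneg _) (hmin hx) 2
  obtain ⟨μ, hμ⟩ : ∃ μ : ℝ, adjoint A (A x₀) = μ • x₀ :=
    ⟨_, ((isPositive_adjoint_comp_self A).isSelfAdjoint.hasEigenvector_of_isMinOn
      (norm_ne_zero_iff.1 (by simp [hx₀])) hextr).apply_eq_smul⟩
  have hμA : μ = ‖A x₀‖ ^ 2 := by
    rw [apply_norm_sq_eq_inner_adjoint_left, comp_apply, hμ, RCLike.re_to_real,
      real_inner_smul_left, real_inner_self_eq_norm_sq, hx₀, one_pow, mul_one]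
  rwa [← hμA]

variable [FiniteDimensional ℝ X] [FiniteDimensional ℝ Y]

theorem ContinuousLinearMap.exists_norm_eq_one_adjoint_apply_eq_zero (A : X →L[ℝ] Y)
    (hdim : finrank ℝ X ≤ finrank ℝ Y) (hA : ¬ Function.Injective A) :
    ∃ y : Y, ‖y‖ = 1 ∧ adjoint A y = 0 := by
  have hker : 0 < finrank ℝ (LinearMap.ker (A : X →ₗ[ℝ] Y)) := by
    refine Nat.pos_of_ne_zero ?_
    rwa [Ne, Submodule.finrank_eq_zero, LinearMap.ker_eq_bot]
  have hrange : LinearMap.range (A : X →ₗ[ℝ] Y) ≠ ⊤ := by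
    intro htop
    have := LinearMap.finrank_range_add_finrank_ker (A : X →ₗ[ℝ] Y)
    rw [htop, finrank_top] at this
    omega
  have : Nontrivial (adjoint A).ker := by
    rwa [← orthogonal_range, Submodule.nontrivial_iff_ne_bot, Ne, Submodule.orthogonal_eq_bot_iff]
  obtain ⟨y, hy⟩ := (NormedSpace.sphere_nonempty (E := (adjoint A).ker) (x := 0) (r := 1)).2
    zero_le_one
  exact ⟨y, by simpa using hy, y.2⟩

theorem ContinuousLinearMap.iInf_norm_adjoint_apply_le [Nontrivial X] (A : X →L[ℝ] Y)
    (hdim : finrank ℝ X ≤ finrank ℝ Y) :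
    ⨅ y : sphere (0 : Y) 1, ‖adjoint A y‖ ≤ ⨅ x : sphere (0 : X) 1, ‖A x‖ := by
  obtain ⟨x₀, hx₀, hmin⟩ := (isCompact_sphere (0 : X) 1).exists_isMinOn
    (NormedSpace.sphere_nonempty.2 zero_le_one)
    (by fun_prop : Continuous fun x => ‖A x‖).continuousOn
  have hx₀1 : ‖x₀‖ = 1 := by simpa using hx₀
  have hx₀0 : x₀ ≠ 0 := by
    rintro rfl
    simp at hx₀1
  obtain ⟨y, hy, hAy⟩ : ∃ y : Y, ‖y‖ = 1 ∧ ‖adjoint A y‖ ≤ ‖A x₀‖ := by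
    rcases eq_or_ne (A x₀) 0 with h0 | h0
    · have hA : ¬ Function.Injective A := fun hinj => hx₀0 (hinj (by rw [h0, map_zero]))
      obtain ⟨y, hy, hAy⟩ := A.exists_norm_eq_one_adjoint_apply_eq_zero hdim hA
      exact ⟨y, hy, by simp [hAy]⟩
    · refine ⟨‖A x₀‖⁻¹ • A x₀, by simp [norm_smul, h0], le_of_eq ?_⟩
      rw [map_smul, A.adjoint_apply_apply_eq_of_isMinOn hx₀1 hmin, smul_smul, norm_smul, hx₀1,
        mul_one, Real.norm_of_nonneg (by positivity)]
      field_simp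
  rw [hmin.iInf_eq hx₀]
  have hbdd : BddBelow (Set.range fun y : sphere (0 : Y) 1 => ‖adjoint A y‖) :=
    ⟨0, by rintro _ ⟨z, rfl⟩; exact norm_nonneg _⟩
  exact (ciInf_le hbdd ⟨y, by simpa using hy⟩).trans hAy

theorem ContinuousLinearMap.iInf_norm_adjoint_apply_eq [Nontrivial X] (A : X →L[ℝ] Y)
    (hdim : finrank ℝ X = finrank ℝ Y) :
    ⨅ y : sphere (0 : Y) 1, ‖adjoint A y‖ = ⨅ x : sphere (0 : X) 1, ‖A x‖ := by
  have : Nontrivial Y := nontrivial_of_finrank_pos (hdim ▸ finrank_pos)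
  refine le_antisymm (A.iInf_norm_adjoint_apply_le hdim.le) ?_
  simpa using (adjoint A).iInf_norm_adjoint_apply_le hdim.ge

end SmallestSingularValue

section SubspaceAngles

variable {E : Type*} [NormedAddCommGroup E] [InnerProductSpace ℝ E]

theorem InnerProductGeometry.angle_eq_arccos_inner_of_norm_eq_one {v w : E} (hv : ‖v‖ = 1)
    (hw : ‖w‖ = 1) : angle v w = Real.arccos (inner ℝ v w) := by
  simp [angle, hv, hw]

theorem Submodule.inner_eq_inner_starProjection (M : Submodule ℝ E) [M.HasOrthogonalProjection]
    (v : E) {w : E} (hw : w ∈ M) : inner ℝ v w = inner ℝ (M.starProjection v) w := by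
  rw [M.inner_starProjection_left_eq_right, M.starProjection_eq_self_iff.2 hw]

theorem Submodule.inner_le_norm_starProjection (M : Submodule ℝ E) [M.HasOrthogonalProjection]
    (v : E) {w : E} (hw : w ∈ M) (hw1 : ‖w‖ = 1) :
    inner ℝ v w ≤ ‖M.starProjection v‖ := by
  rw [M.inner_eq_inner_starProjection v hw]
  simpa [hw1] using real_inner_le_norm (M.starProjection v) w

theorem Submodule.exists_inner_eq_norm_starProjection (M : Submodule ℝ E)
    [M.HasOrthogonalProjection] [Nontrivial M] (v : E) :
    ∃ w ∈ M, ‖w‖ = 1 ∧ inner ℝ v w = ‖M.starProjection v‖ := by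
  rcases eq_or_ne (M.starProjection v) 0 with h0 | h0
  · obtain ⟨w, hw⟩ := (NormedSpace.sphere_nonempty (E := M) (x := 0) (r := 1)).2 zero_le_one
    refine ⟨w, w.2, by simpa using hw, ?_⟩
    rw [M.inner_eq_inner_starProjection v w.2, h0, inner_zero_left, norm_zero]
  · have hmem := M.smul_mem ‖M.starProjection v‖⁻¹ (M.starProjection_apply_mem v)
    refine ⟨_, hmem, by simp [norm_smul, h0], ?_⟩
    rw [M.inner_eq_inner_starProjection v hmem, real_inner_smul_right,
      real_inner_self_eq_norm_sq]
    field_simp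

theorem Submodule.iInf_angle_eq_arccos_norm_starProjection (M : Submodule ℝ E)
    [M.HasOrthogonalProjection] [Nontrivial M] {v : E} (hv : ‖v‖ = 1) :
    ⨅ w : {w : E // w ∈ M ∧ ‖w‖ = 1}, angle v w.1 = Real.arccos ‖M.starProjection v‖ := by
  obtain ⟨w₀, hw₀, hw₀1, hvw₀⟩ := M.exists_inner_eq_norm_starProjection v
  have : Nonempty {w : E // w ∈ M ∧ ‖w‖ = 1} := ⟨⟨w₀, hw₀, hw₀1⟩⟩
  have hbdd : BddBelow (Set.range fun w : {w : E // w ∈ M ∧ ‖w‖ = 1} => angle v w.1) :=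
    ⟨0, by rintro _ ⟨w, rfl⟩; exact angle_nonneg _ _⟩
  refine le_antisymm ((ciInf_le hbdd ⟨w₀, hw₀, hw₀1⟩).trans_eq ?_) (le_ciInf fun w => ?_)
  · rw [angle_eq_arccos_inner_of_norm_eq_one hv hw₀1, hvw₀]
  · rw [angle_eq_arccos_inner_of_norm_eq_one hv w.2.2]
    exact Real.arccos_le_arccos (M.inner_le_norm_starProjection v w.2.1 w.2.2)

theorem Submodule.iSup_iInf_angle_eq_arccos_iInf (L M : Submodule ℝ E)
    [M.HasOrthogonalProjection] [Nontrivial L] [Nontrivial M] :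
    ⨆ v : {v : E // v ∈ L ∧ ‖v‖ = 1}, ⨅ w : {w : E // w ∈ M ∧ ‖w‖ = 1}, angle v.1 w.1 =
      Real.arccos (⨅ v : {v : E // v ∈ L ∧ ‖v‖ = 1}, ‖M.starProjection v‖) := by
  obtain ⟨u, hu⟩ := (NormedSpace.sphere_nonempty (E := L) (x := 0) (r := 1)).2 zero_le_one
  have : Nonempty {v : E // v ∈ L ∧ ‖v‖ = 1} := ⟨⟨u, u.2, by simpa using hu⟩⟩
  have hbdd : BddBelow (Set.range fun v : {v : E // v ∈ L ∧ ‖v‖ = 1} => ‖M.starProjection v‖) :=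
    ⟨0, by rintro _ ⟨v, rfl⟩; exact norm_nonneg _⟩
  rw [Real.antitone_arccos.map_ciInf_of_continuousAt Real.continuous_arccos.continuousAt hbdd]
  exact iSup_congr fun v => M.iInf_angle_eq_arccos_norm_starProjection v.2.2

theorem Submodule.iInf_sphere_eq_iInf_subtype (L : Submodule ℝ E) (f : E → ℝ) :
    ⨅ x : sphere (0 : L) 1, f x = ⨅ v : {v : E // v ∈ L ∧ ‖v‖ = 1}, f v :=
  Function.Surjective.iInf_comp (g := fun v : {v : E // v ∈ L ∧ ‖v‖ = 1} => f v)
    (f := fun x : sphere (0 : L) 1 => ⟨x.1.1, x.1.2, mem_sphere_zero_iff_norm.1 x.2⟩)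
    (fun v => ⟨⟨⟨v.1, v.2.1⟩, mem_sphere_zero_iff_norm.2 v.2.2⟩, rfl⟩)

theorem Submodule.iInf_norm_starProjection_comm [CompleteSpace E] (L M : Submodule ℝ E)
    [FiniteDimensional ℝ L] [FiniteDimensional ℝ M] [Nontrivial L]
    (h : finrank ℝ L = finrank ℝ M) :
    ⨅ v : {v : E // v ∈ L ∧ ‖v‖ = 1}, ‖M.starProjection v‖ =
      ⨅ w : {w : E // w ∈ M ∧ ‖w‖ = 1}, ‖L.starProjection w‖ := by
  have hadj : adjoint (M.orthogonalProjectionOnto ∘L L.subtypeL) =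
      L.orthogonalProjectionOnto ∘L M.subtypeL := by
    rw [adjoint_comp, Submodule.adjoint_subtypeL, Submodule.adjoint_orthogonalProjectionOnto]
  have key := (M.orthogonalProjectionOnto ∘L L.subtypeL).iInf_norm_adjoint_apply_eq h
  rw [hadj] at key
  rw [← L.iInf_sphere_eq_iInf_subtype fun v => ‖M.starProjection v‖,
    ← M.iInf_sphere_eq_iInf_subtype fun w => ‖L.starProjection w‖]
  exact key.symm

end SubspaceAngles

/-- For `d`-dimensional subspaces `L, L'` of `ℝⁿ` (`0 < d`), the quantity
`max_{v ∈ S(L)} min_{w ∈ S(L')} angle(v,w)` is symmetric in `L` and `L'`. -/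
theorem subspace_angle_dist_symm {n d : ℕ} (hd : 0 < d)
    (L L' : Submodule ℝ (EuclideanSpace ℝ (Fin n)))
    (hL : Module.finrank ℝ L = d) (hL' : Module.finrank ℝ L' = d) :
    (⨆ v : {v : EuclideanSpace ℝ (Fin n) // v ∈ L ∧ ‖v‖ = 1},
      ⨅ w : {w : EuclideanSpace ℝ (Fin n) // w ∈ L' ∧ ‖w‖ = 1}, angle (v.1 : EuclideanSpace ℝ (Fin n)) w.1) =
    (⨆ w : {w : EuclideanSpace ℝ (Fin n) // w ∈ L' ∧ ‖w‖ = 1},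
      ⨅ v : {v : EuclideanSpace ℝ (Fin n) // v ∈ L ∧ ‖v‖ = 1}, angle (v.1 : EuclideanSpace ℝ (Fin n)) w.1) := by
  have : Nontrivial L := nontrivial_of_finrank_pos (hL ▸ hd)
  have : Nontrivial L' := nontrivial_of_finrank_pos (hL' ▸ hd)
  have hswap : (⨆ w : {w : EuclideanSpace ℝ (Fin n) // w ∈ L' ∧ ‖w‖ = 1},
      ⨅ v : {v : EuclideanSpace ℝ (Fin n) // v ∈ L ∧ ‖v‖ = 1}, angle v.1 w.1) =
      ⨆ w : {w : EuclideanSpace ℝ (Fin n) // w ∈ L' ∧ ‖w‖ = 1},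
        ⨅ v : {v : EuclideanSpace ℝ (Fin n) // v ∈ L ∧ ‖v‖ = 1}, angle w.1 v.1 :=
    iSup_congr fun w => iInf_congr fun v => angle_comm _ _
  rw [hswap, L.iSup_iInf_angle_eq_arccos_iInf L', L'.iSup_iInf_angle_eq_arccos_iInf L,
    L.iInf_norm_starProjection_comm L' (hL.trans hL'.symm)]
end
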